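/- For a binary [n,k] code C with generator matrix rows g_1,…,g_k, the code ideal I(C) in K[x_1,…,x_n] is generated by {x^{g_i} − 1 : 1 ≤ i ≤ k} ∪ {x_i^2 − 1 : 1 ≤ i ≤ n}. -/

import Mathlib

/-!
Modulo the relations `x_i ^ 2 = 1`, the monomial `x^c` of a word `c` depends only on `c`
as an element of `F_2^n`, and `c ↦ x^c` becomes a homomorphism from the additive group of words
to the multiplicative monoid of the quotient ring. Its kernel is a subcode; if it contains the
generators `g_i` it contains `C`, and then `x^a = x^(a - b) x^b = x^b` whenever `a - b ∈ C`.
-/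

open MvPolynomial

/-- Exponent vector in {0,1}^n ⊆ ℕ^n of a word over F_2. -/
noncomputable def toExp {p n : ℕ} (c : Fin n → ZMod p) : Fin n →₀ ℕ :=
  Finsupp.equivFunOnFinite.symm fun i => (c i).val

/-- The code ideal I(C) = ⟨x^a − x^b : a − b ∈ C, a, b ∈ {0,1}^n⟩ + ⟨x_i^2 − 1⟩
of a binary code C. -/
noncomputable def codeIdeal (K : Type*) [Field K] {n : ℕ}
    (C : Submodule (ZMod 2) (Fin n → ZMod 2)) : Ideal (MvPolynomial (Fin n) K) :=
  Ideal.span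
    ({f | ∃ a b : Fin n → ZMod 2, a - b ∈ C ∧
        f = monomial (toExp a) (1 : K) - monomial (toExp b) 1} ∪
     {f | ∃ i : Fin n, f = X i ^ 2 - 1})

lemma pow_val_add_of_pow_eq_one {M : Type*} [Monoid M] {p : ℕ} [NeZero p] {x : M}
    (hx : x ^ p = 1) (a b : ZMod p) : x ^ (a + b).val = x ^ a.val * x ^ b.val := by
  rw [← pow_add, pow_eq_pow_mod (a.val + b.val) hx, ZMod.val_add]

@[simp] lemma toExp_apply {p n : ℕ} (c : Fin n → ZMod p) (i : Fin n) :
    toExp c i = (c i).val := rfl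

@[simp] lemma toExp_zero {p n : ℕ} : toExp (0 : Fin n → ZMod p) = 0 := by
  ext i; simp

lemma monomial_toExp_eq_prod {K : Type*} [CommSemiring K] {p n : ℕ} (c : Fin n → ZMod p) :
    monomial (toExp c) (1 : K) = ∏ i, X i ^ (c i).val := by
  rw [monomial_eq, C_1, one_mul, Finsupp.prod_fintype _ _ (fun _ => pow_zero _)]
  rfl

section WordMonomial

variable {K A : Type*} [CommSemiring K] [CommMonoid A] {p n : ℕ} [NeZero p]

lemma map_monomial_toExp_add (f : MvPolynomial (Fin n) K →* A) (hf : ∀ i, f (X i) ^ p = 1)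
    (c d : Fin n → ZMod p) :
    f (monomial (toExp (c + d)) 1) = f (monomial (toExp c) 1) * f (monomial (toExp d) 1) := by
  simp only [monomial_toExp_eq_prod, map_prod, map_pow, ← Finset.prod_mul_distrib, Pi.add_apply,
    pow_val_add_of_pow_eq_one (hf _)]

-- Valued in `Additive A` so that the kernel is an additive subgroup, hence a `ZMod p`-submodule.
noncomputable def wordMonomialHom (f : MvPolynomial (Fin n) K →* A) (hf : ∀ i, f (X i) ^ p = 1) :
    (Fin n → ZMod p) →+ Additive A where
  toFun c := Additive.ofMul (f (monomial (toExp c) 1))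
  map_zero' := by simp
  map_add' := map_monomial_toExp_add f hf

end WordMonomial

lemma monomial_toExp_sub_mem_of_sub_mem_span {K : Type*} [CommRing K] {p n : ℕ} [NeZero p]
    {J : Ideal (MvPolynomial (Fin n) K)} (hX : ∀ i, X i ^ p - 1 ∈ J)
    {s : Set (Fin n → ZMod p)} (hs : ∀ c ∈ s, monomial (toExp c) 1 - 1 ∈ J)
    {a b : Fin n → ZMod p} (hab : a - b ∈ Submodule.span (ZMod p) s) :
    monomial (toExp a) 1 - monomial (toExp b) 1 ∈ J := by
  let φ := wordMonomialHom (Ideal.Quotient.mk J).toMonoidHom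
    fun i => by simpa [← map_pow, Ideal.Quotient.mk_eq_one_iff_sub_mem] using hX i
  have hsφ : Submodule.span (ZMod p) s ≤ AddSubgroup.toZModSubmodule p φ.ker :=
    Submodule.span_le.mpr fun c hc => (Ideal.Quotient.mk_eq_one_iff_sub_mem _).mpr (hs c hc)
  exact Ideal.Quotient.eq.mp (φ.sub_mem_ker_iff.mp (hsφ hab))

/-- for a binary [n,k] code C with generator matrix rows g_1,…,g_k,
I(C) is generated by {x^{g_i} − 1 : 1 ≤ i ≤ k} ∪ {x_i^2 − 1 : 1 ≤ i ≤ n}. -/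
theorem stmt_10 (K : Type*) [Field K] (n k : ℕ) (g : Fin k → Fin n → ZMod 2)
    (C : Submodule (ZMod 2) (Fin n → ZMod 2))
    (hC : C = Submodule.span (ZMod 2) (Set.range g)) :
    codeIdeal K C =
      Ideal.span
        ({f | ∃ i : Fin k, f = monomial (toExp (g i)) (1 : K) - 1} ∪
         {f | ∃ i : Fin n, f = X i ^ 2 - 1}) := by
  subst hC
  refine le_antisymm (Ideal.span_le.mpr ?_) (Ideal.span_le.mpr ?_)
  · rintro _ (⟨a, b, hab, rfl⟩ | ⟨i, rfl⟩)
    · refine monomial_toExp_sub_mem_of_sub_mem_span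
        (fun i => Ideal.subset_span (Or.inr ⟨i, rfl⟩)) ?_ hab
      rintro _ ⟨i, rfl⟩
      exact Ideal.subset_span (Or.inl ⟨i, rfl⟩)
    · exact Ideal.subset_span (Or.inr ⟨i, rfl⟩)
  · rintro _ (⟨i, rfl⟩ | ⟨i, rfl⟩)
    · refine Ideal.subset_span (Or.inl ⟨g i, 0, ?_, by simp⟩)
      simpa using Submodule.subset_span (Set.mem_range_self i)
    · exact Ideal.subset_span (Or.inr ⟨i, rfl⟩)
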